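/- For all k ≥ 0, s(3·2^(2k) − 1) = 3·2^k and s(3·2^(2k+1) − 1) = 2^(k+2). -/

import Mathlib

/-!
With `t n = ∑_{i ≤ n} (-1)^i a(i)`, splitting `∑_{i ≤ 2n+1}` into even and odd indices gives
`s(2n+1) = s(n) + t(n)` and `t(2n+1) = s(n) - t(n)`. Applying this twice, `s(4n+3) = 2 s(n)` and
`t(4n+3) = 2 t(n)`, so `s(3·4^k - 1) = 2^k s(2) = 3·2^k` and `t(3·4^k - 1) = 2^k t(2) = 2^k`;
one more doubling step gives `s(3·2^(2k+1) - 1) = 3·2^k + 2^k = 2^(k+2)`.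
-/

def rs : ℕ → ℤ
  | 0 => 1
  | (n+1) =>
    if (n+1) % 2 = 0 then rs ((n+1)/2)
    else (-1)^((n+1)/2) * rs ((n+1)/2)
decreasing_by all_goals exact Nat.div_lt_self (Nat.succ_pos n) (by norm_num)

def s (n : ℕ) : ℤ := ∑ i ∈ Finset.range (n+1), rs i

def t (n : ℕ) : ℤ := ∑ i ∈ Finset.range (n+1), (-1)^i * rs i

lemma rs_two_mul (n : ℕ) : rs (2 * n) = rs n := by
  cases n with
  | zero => rfl
  | succ m =>
    rw [show 2 * (m + 1) = (2 * m + 1) + 1 by ring, rs]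
    simp [show (2 * m + 1 + 1) % 2 = 0 by omega, show (2 * m + 1 + 1) / 2 = m + 1 by omega]

lemma rs_two_mul_add_one (n : ℕ) : rs (2 * n + 1) = (-1) ^ n * rs n := by
  rw [rs]
  simp [show (2 * n + 1) / 2 = n by omega]

lemma s_add_one (n : ℕ) : s (n + 1) = s n + rs (n + 1) :=
  Finset.sum_range_succ _ _

lemma t_add_one (n : ℕ) : t (n + 1) = t n + (-1) ^ (n + 1) * rs (n + 1) :=
  Finset.sum_range_succ _ _

lemma s_two_mul_add_one (n : ℕ) : s (2 * n + 1) = s n + t n := by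
  induction n with
  | zero => simp [s, t, Finset.sum_range_succ, rs_two_mul_add_one 0]
  | succ m ih =>
    rw [show 2 * (m + 1) + 1 = 2 * m + 1 + 1 + 1 by ring, s_add_one, s_add_one, ih,
      show 2 * m + 1 + 1 = 2 * (m + 1) by ring, rs_two_mul, rs_two_mul_add_one, s_add_one,
      t_add_one]
    ring

lemma t_two_mul_add_one (n : ℕ) : t (2 * n + 1) = s n - t n := by
  induction n with
  | zero => simp [s, t, Finset.sum_range_succ, rs_two_mul_add_one 0]
  | succ m ih =>
    rw [show 2 * (m + 1) + 1 = 2 * m + 1 + 1 + 1 by ring, t_add_one, t_add_one, ih,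
      show 2 * m + 1 + 1 = 2 * (m + 1) by ring, rs_two_mul, rs_two_mul_add_one, s_add_one,
      t_add_one, pow_succ _ (2 * (m + 1)), pow_mul]
    ring

lemma s_four_mul_add_three (n : ℕ) : s (4 * n + 3) = 2 * s n := by
  rw [show 4 * n + 3 = 2 * (2 * n + 1) + 1 by ring, s_two_mul_add_one, s_two_mul_add_one,
    t_two_mul_add_one]
  ring

lemma t_four_mul_add_three (n : ℕ) : t (4 * n + 3) = 2 * t n := by
  rw [show 4 * n + 3 = 2 * (2 * n + 1) + 1 by ring, t_two_mul_add_one, s_two_mul_add_one,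
    t_two_mul_add_one]
  ring

lemma four_pow_succ_mul_sub_one (k n : ℕ) :
    4 ^ (k + 1) * (n + 1) - 1 = 4 * (4 ^ k * (n + 1) - 1) + 3 := by
  have : 0 < 4 ^ k * (n + 1) := by positivity
  rw [pow_succ, mul_right_comm]
  omega

lemma s_four_pow_mul_sub_one (k n : ℕ) : s (4 ^ k * (n + 1) - 1) = 2 ^ k * s n := by
  induction k with
  | zero => simp
  | succ k ih => rw [four_pow_succ_mul_sub_one, s_four_mul_add_three, ih]; ring

lemma t_four_pow_mul_sub_one (k n : ℕ) : t (4 ^ k * (n + 1) - 1) = 2 ^ k * t n := by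
  induction k with
  | zero => simp
  | succ k ih => rw [four_pow_succ_mul_sub_one, t_four_mul_add_three, ih]; ring

lemma s_two : s 2 = 3 := by
  norm_num [s, Finset.sum_range_succ, rs_two_mul 1, rs_two_mul_add_one 0, rs]

lemma t_two : t 2 = 1 := by
  norm_num [t, Finset.sum_range_succ, rs_two_mul 1, rs_two_mul_add_one 0, rs]

theorem stmt14 : ∀ k : ℕ,
    s (3 * 2^(2*k) - 1) = 3 * 2^k ∧ s (3 * 2^(2*k+1) - 1) = 2^(k+2) := by
  intro k
  have h_even : 3 * 2 ^ (2 * k) - 1 = 4 ^ k * (2 + 1) - 1 := by rw [pow_mul]; ring_nf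
  have h_odd : 3 * 2 ^ (2 * k + 1) - 1 = 2 * (3 * 2 ^ (2 * k) - 1) + 1 := by
    have : 0 < 2 ^ (2 * k) := by positivity
    rw [pow_succ]
    omega
  have hs : s (3 * 2 ^ (2 * k) - 1) = 3 * 2 ^ k := by
    rw [h_even, s_four_pow_mul_sub_one, s_two]; ring
  have ht : t (3 * 2 ^ (2 * k) - 1) = 2 ^ k := by
    rw [h_even, t_four_pow_mul_sub_one, t_two]; ring
  refine ⟨hs, ?_⟩
  rw [h_odd, s_two_mul_add_one, hs, ht]
  ring
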